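/- arXiv:2501.07916 — 7 statements merged into one kernel-verified Lean document; each statement's English description precedes it below -/
import Mathlib

section
/- For every Polish space X (a separable completely metrizable topological space), the path-connectedness relation on X, i.e. the set {(x, y) ∈ X × X : there is a continuous path γ : [0,1] → X with γ(0) = x and γ(1) = y}, is an analytic subset of X × X. -/
/-- The Cantor space `2^ℕ`. -/
abbrev Cantor : Type := ℕ → Fin 2

/-- Eventual equality `E₀` on `2^ℕ`. -/
def E0 (α β : Cantor) : Prop := ∃ m : ℕ, ∀ n ≥ m, α n = β n

/-- Pointwise complement of a binary sequence. -/
def cmpl (α : Cantor) : Cantor := fun n => 1 - α n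

/-- The relation `E₀*`: `α E₀* β` iff `α E₀ β` or `α E₀ β̄`. -/
def E0star (α β : Cantor) : Prop := E0 α β ∨ E0 α (cmpl β)

/-- The relation `Fₙ`: agreement from coordinate `n` onwards. -/
def Frel (n : ℕ) (α β : Cantor) : Prop := ∀ i ≥ n, α i = β i

/-- The pieces `Hₖ` of the Knaster continuum. -/
def Hset (k : ℕ) : Set (ℝ × ℝ) :=
  if k = 0 then
    {p | 0 ≤ p.2 ∧ ∃ c ∈ cantorSet, (p.1 - 1/2)^2 + p.2^2 = (c - 1/2)^2}
  else
    {p | p.2 ≤ 0 ∧ ∃ c ∈ cantorSet ∩ Set.Icc ((2:ℝ)/3^k) (3/3^k),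
      (p.1 - 5/(2*3^k))^2 + p.2^2 = (c - 5/(2*3^k))^2}

/-- The Knaster continuum (buckethandle). -/
def knasterH : Set (ℝ × ℝ) := ⋃ k : ℕ, Hset k

/-- The map `ψ : 2^ℕ → ℝ²` sending `α` to the corresponding Cantor set point on the x-axis. -/
noncomputable def psi (α : Cantor) : ℝ × ℝ := (∑' i : ℕ, 2 * (α i : ℝ) / 3^(i+1), 0)

open unitInterval in
theorem setOf_joined_eq_range_endpoints {X : Type*} [TopologicalSpace X] :
    {p : X × X | Joined p.1 p.2} = Set.range (fun γ : C(I, X) => (γ 0, γ 1)) := by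
  ext ⟨x, y⟩
  constructor
  · rintro ⟨γ⟩
    exact ⟨γ.toContinuousMap, by simp⟩
  · rintro ⟨γ, hγ⟩
    obtain ⟨rfl, rfl⟩ := Prod.mk.inj hγ
    exact ⟨⟨γ, rfl, rfl⟩⟩

/-- For every Polish space `X`, the path-connectedness relation on `X`
is an analytic subset of `X × X`. -/
theorem analyticSet_joined (X : Type*) [TopologicalSpace X] [PolishSpace X] :
    MeasureTheory.AnalyticSet {p : X × X | Joined p.1 p.2} := by
  -- A complete metric on `X` makes `C(I, X)` Polish under the compact-open topology.
  let := TopologicalSpace.upgradeIsCompletelyMetrizable X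
  rw [setOf_joined_eq_range_endpoints]
  exact MeasureTheory.analyticSet_range_of_polishSpace (by fun_prop)
end

section
/- E₀* is a hyperfinite Borel equivalence relation: defining Rₙ on 2^ℕ by α Rₙ β iff (α Fₙ β or α Fₙ β̄), each Rₙ is a Borel equivalence relation all of whose equivalence classes are finite, the sequence (Rₙ)ₙ is increasing (Rₙ ⊆ Rₙ₊₁ for all n), and E₀* = ⋃ₙ Rₙ. -/
/-- The relation `Rₙ`: `α Rₙ β` iff `α Fₙ β` or `α Fₙ β̄`. -/
def Rrel (n : ℕ) (α β : Cantor) : Prop := Frel n α β ∨ Frel n α (cmpl β)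

/-!
Each `Fₙ`-class is determined by the first `n` coordinates, so it has at most `2ⁿ` elements, and
complementation is an involution mapping `Fₙ`-classes to `Fₙ`-classes; hence `Rₙ`, which glues each
`Fₙ`-class to its complement, is an equivalence relation with at most `2ⁿ⁺¹` elements per class.
Both relations are countable intersections of conditions on single coordinates, hence Borel, and
`E₀ = ⋃ₙ Fₙ` immediately gives `E₀* = ⋃ₙ Rₙ`.
-/

@[simp]
lemma cmpl_apply (α : Cantor) (i : ℕ) : cmpl α i = 1 - α i := rfl

@[simp]
lemma cmpl_cmpl (α : Cantor) : cmpl (cmpl α) = α := by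
  funext i
  simp only [cmpl_apply, sub_sub_cancel]

lemma measurable_cmpl : Measurable cmpl :=
  measurable_pi_lambda _ fun i => (measurable_pi_apply i).const_sub 1

namespace Frel

variable {n : ℕ} {α β : Cantor}

lemma equivalence (n : ℕ) : Equivalence (Frel n) where
  refl _ _ _ := rfl
  symm h i hi := (h i hi).symm
  trans h h' i hi := (h i hi).trans (h' i hi)

lemma cmpl (h : Frel n α β) : Frel n (cmpl α) (cmpl β) := fun i hi => by
  simp only [cmpl_apply, h i hi]

lemma cmpl_right_comm (h : Frel n α (_root_.cmpl β)) : Frel n β (_root_.cmpl α) := by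
  simpa using ((equivalence n).symm h).cmpl

lemma mono {m : ℕ} (h : Frel m α β) (hmn : m ≤ n) : Frel n α β :=
  fun i hi => h i (hmn.trans hi)

lemma measurableSet (n : ℕ) : MeasurableSet {p : Cantor × Cantor | Frel n p.1 p.2} := by
  have hset : {p : Cantor × Cantor | Frel n p.1 p.2} = ⋂ i ≥ n, {p | p.1 i = p.2 i} := by
    ext p
    simp only [Frel, Set.mem_ofPred_eq, Set.mem_iInter]
  rw [hset]
  exact .biInter (Set.to_countable _) fun i _ =>
    measurableSet_eq_fun ((measurable_pi_apply i).comp measurable_fst)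
      ((measurable_pi_apply i).comp measurable_snd)

/-- Restriction to the first `n` coordinates is injective on an `Fₙ`-class. -/
lemma finite_setOf (n : ℕ) (α : Cantor) : {β | Frel n α β}.Finite := by
  refine Set.Finite.of_finite_image (f := fun β (i : Fin n) => β i) (Set.toFinite _) ?_
  intro β hβ γ hγ hβγ
  funext i
  rcases lt_or_ge i n with hi | hi
  · exact congr_fun hβγ ⟨i, hi⟩
  · exact (hβ i hi).symm.trans (hγ i hi)

end Frel

namespace Rrel

variable {n : ℕ} {α β : Cantor}

lemma equivalence (n : ℕ) : Equivalence (Rrel n) where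
  refl α := .inl ((Frel.equivalence n).refl α)
  symm
    | .inl h => .inl ((Frel.equivalence n).symm h)
    | .inr h => .inr h.cmpl_right_comm
  trans
    | .inl h, .inl h' => .inl ((Frel.equivalence n).trans h h')
    | .inl h, .inr h' => .inr ((Frel.equivalence n).trans h h')
    | .inr h, .inl h' => .inr ((Frel.equivalence n).trans h h'.cmpl)
    | .inr h, .inr h' => .inl ((Frel.equivalence n).trans h (by simpa using h'.cmpl))

lemma mono {m : ℕ} (h : Rrel m α β) (hmn : m ≤ n) : Rrel n α β :=
  h.imp (Frel.mono · hmn) (Frel.mono · hmn)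

lemma measurableSet (n : ℕ) : MeasurableSet {p : Cantor × Cantor | Rrel n p.1 p.2} :=
  (Frel.measurableSet n).union
    ((Frel.measurableSet n).preimage (measurable_fst.prodMk (measurable_cmpl.comp measurable_snd)))

lemma finite_setOf (n : ℕ) (α : Cantor) : {β | Rrel n α β}.Finite :=
  (Frel.finite_setOf n α).union
    ((Frel.finite_setOf n α).preimage (Function.LeftInverse.injective cmpl_cmpl).injOn)

end Rrel

lemma e0_iff_exists_frel {α β : Cantor} : E0 α β ↔ ∃ n, Frel n α β := Iff.rfl

lemma e0star_iff_exists_rrel {α β : Cantor} : E0star α β ↔ ∃ n, Rrel n α β := by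
  simp only [E0star, Rrel, e0_iff_exists_frel, exists_or]

/-- `E₀*` is a hyperfinite Borel equivalence relation, witnessed by the
Borel equivalence relations `Rₙ` with finite classes whose increasing union is `E₀*`. -/
theorem E0star_hyperfinite_via_Rrel :
    (∀ n : ℕ, Equivalence (Rrel n)) ∧
    (∀ n : ℕ, MeasurableSet {p : Cantor × Cantor | Rrel n p.1 p.2}) ∧
    (∀ n : ℕ, ∀ α : Cantor, {β : Cantor | Rrel n α β}.Finite) ∧
    (∀ n : ℕ, ∀ α β : Cantor, Rrel n α β → Rrel (n + 1) α β) ∧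
    (∀ α β : Cantor, E0star α β ↔ ∃ n : ℕ, Rrel n α β) :=
  ⟨Rrel.equivalence, Rrel.measurableSet, Rrel.finite_setOf,
    fun n _ _ h => h.mono n.le_succ, fun _ _ => e0star_iff_exists_rrel⟩
end

section
/- The map f : 2^ℕ → 2^ℕ defined by f(α)(2i) = α(i) and f(α)(2i+1) = 1 for all i ∈ ℕ (i.e. f(α) = (α₀, 1, α₁, 1, α₂, 1, ...)) is continuous, and for all α, β ∈ 2^ℕ, α E₀ β iff f(α) E₀* f(β). In particular, E₀ is Borel reducible to E₀*. -/
/-- The map interleaving a binary sequence with the constant sequence `1`. -/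
def interleaveOne (α : Cantor) : Cantor := fun n => if n % 2 = 0 then α (n / 2) else 1

open Filter

@[simp]
lemma interleaveOne_two_mul (α : Cantor) (i : ℕ) : interleaveOne α (2 * i) = α i := by
  simp [interleaveOne]

@[simp]
lemma interleaveOne_two_mul_add_one (α : Cantor) (i : ℕ) : interleaveOne α (2 * i + 1) = 1 := by
  simp [interleaveOne, Nat.add_mod]

lemma continuous_interleaveOne : Continuous interleaveOne :=
  continuous_pi fun n => by
    unfold interleaveOne
    split_ifs
    · exact continuous_apply _
    · exact continuous_const

lemma E0_interleaveOne_iff {α β : Cantor} :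
    E0 (interleaveOne α) (interleaveOne β) ↔ E0 α β := by
  constructor
  · rintro ⟨m, hm⟩
    exact ⟨m, fun i hi => by simpa using hm (2 * i) (by omega)⟩
  · rintro ⟨m, hm⟩
    refine ⟨2 * m, fun n hn => ?_⟩
    obtain ⟨i, rfl | rfl⟩ := Nat.even_or_odd' n
    · simp [hm i (by omega)]
    · simp

lemma frequently_interleaveOne_eq (α β : Cantor) :
    ∃ᶠ n in atTop, interleaveOne α n = interleaveOne β n :=
  frequently_atTop.2 fun m => ⟨2 * m + 1, by omega, by simp⟩

lemma not_E0_cmpl_of_frequently_eq {α β : Cantor} (h : ∃ᶠ n in atTop, α n = β n) :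
    ¬ E0 α (cmpl β) := by
  rintro ⟨m, hm⟩
  obtain ⟨n, hn, heq⟩ := frequently_atTop.1 h m
  have hfix : α n = 1 - α n := by
    simpa only [cmpl, ← heq] using hm n hn
  generalize α n = x at hfix
  fin_cases x <;> simp at hfix

/-- The map `f(α) = (α₀, 1, α₁, 1, α₂, 1, ...)` is continuous and is a
reduction of `E₀` to `E₀*`; in particular `E₀ ≤_B E₀*`. -/
theorem E0_reducible_E0star :
    Continuous interleaveOne ∧
    ∀ α β : Cantor, E0 α β ↔ E0star (interleaveOne α) (interleaveOne β) := by
  refine ⟨continuous_interleaveOne, fun α β => ?_⟩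
  rw [E0star, E0_interleaveOne_iff,
    or_iff_left (not_E0_cmpl_of_frequently_eq (frequently_interleaveOne_eq α β))]
end

section
/- E₀* is not smooth: there is no Borel measurable map g : 2^ℕ → ℝ such that for all α, β ∈ 2^ℕ, α E₀* β iff g(α) = g(β). -/
/-!
A Borel reduction `g` of `E₀*` to equality is in particular `E₀`-invariant. `E₀`-invariant
Baire measurable sets are meagre or comeagre: flipping finitely many coordinates preserves them
and moves any nonempty open set to meet any other, so they cannot be comeagre in one open set
and meagre in another. Applied to the sets `g ⁻¹' s`, this makes `g` constant on a comeagre set.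
That set then lies in a single `E₀*`-class, which is countable and hence meagre in the perfect
space `2^ℕ`, contradicting the Baire category theorem.
-/

open Filter Set Topology

instance Pi.perfectSpace {ι : Type*} [Infinite ι] {X : ι → Type*} [∀ i, TopologicalSpace (X i)]
    [∀ i, Nontrivial (X i)] : PerfectSpace (∀ i, X i) := by
  classical
  refine ⟨preperfect_iff_nhds.2 fun x _ U hU => ?_⟩
  rw [nhds_pi, Filter.mem_pi] at hU
  obtain ⟨I, hI, t, ht, hIU⟩ := hU
  obtain ⟨j, hj⟩ := hI.infinite_compl.nonempty
  obtain ⟨y, hy⟩ := exists_ne (x j)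
  refine ⟨Function.update x j y, ⟨hIU fun i hi => ?_, trivial⟩,
    fun h => hy (by simpa using congrFun h j)⟩
  rw [Function.update_of_ne (ne_of_mem_of_not_mem hi hj)]
  exact mem_of_mem_nhds (ht i)

theorem Set.Countable.isMeagre {X : Type*} [TopologicalSpace X] [T1Space X] [PerfectSpace X]
    {s : Set X} (hs : s.Countable) : IsMeagre s := by
  rw [← biUnion_of_singleton s]
  refine isMeagre_biUnion hs fun x _ => IsNowhereDense.isMeagre ?_
  rw [isClosed_singleton.isNowhereDense_iff, interior_singleton]

theorem BaireMeasurableSet.isMeagre_or_isMeagre_compl_of_topologicallyTransitive {X : Type*}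
    [TopologicalSpace X] [BaireSpace X] {S : Set X} (hS : BaireMeasurableSet S)
    (h : ∀ U V : Set X, IsOpen U → IsOpen V → U.Nonempty → V.Nonempty →
      ∃ φ : X ≃ₜ X, φ ⁻¹' S = S ∧ (U ∩ φ ⁻¹' V).Nonempty) :
    IsMeagre S ∨ IsMeagre Sᶜ := by
  by_contra! ⟨hS_nonmeagre, hSc_nonmeagre⟩
  obtain ⟨U, hU, hSU⟩ := hS.residualEq_isOpen
  obtain ⟨V, hV, hSV⟩ := hS.compl.residualEq_isOpen
  have nonempty_of_residualEq {T W : Set X} (hT : ¬ IsMeagre T) (hTW : T =ᵇ W) : W.Nonempty := by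
    rw [nonempty_iff_ne_empty]
    rintro rfl
    exact hT (eventuallyEq_empty.1 hTW)
  obtain ⟨φ, hφS, hUV⟩ := h U V hU hV (nonempty_of_residualEq hS_nonmeagre hSU)
    (nonempty_of_residualEq hSc_nonmeagre hSV)
  have hSV' : φ ⁻¹' Sᶜ =ᵇ φ ⁻¹' V :=
    (tendsto_residual_of_isOpenMap φ.continuous φ.isOpenMap).eventually hSV
  rw [preimage_compl, hφS] at hSV'
  have hUV_empty := hSU.symm.inter hSV'.symm
  rw [inter_compl_self] at hUV_empty
  exact not_isMeagre_of_isOpen (hU.inter (hV.preimage φ.continuous)) hUV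
    (eventuallyEq_empty.1 hUV_empty)

theorem E0.symm {α β : Cantor} (h : E0 α β) : E0 β α :=
  h.imp fun _ hm n hn => (hm n hn).symm

theorem E0_add_left {v : Cantor} {N : ℕ} (hv : ∀ n ≥ N, v n = 0) (α : Cantor) : E0 (v + α) α :=
  ⟨N, fun n hn => by simp [hv n hn]⟩

theorem finite_setOf_forall_ge_eq (α : Cantor) (m : ℕ) :
    {β : Cantor | ∀ n ≥ m, β n = α n}.Finite := by
  refine Finite.of_finite_image (f := fun β (i : Fin m) => β i) (toFinite _) fun β hβ γ hγ h => ?_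
  funext n
  rcases lt_or_ge n m with hn | hn
  · exact congrFun h ⟨n, hn⟩
  · rw [hβ n hn, hγ n hn]

theorem countable_setOf_E0 (α : Cantor) : {β | E0 β α}.Countable := by
  simp only [E0, ofPred_exists]
  exact countable_iUnion fun m => (finite_setOf_forall_ge_eq α m).countable

theorem countable_setOf_E0star (α : Cantor) : {β | E0star β α}.Countable :=
  (countable_setOf_E0 α).union (countable_setOf_E0 (cmpl α))

theorem BaireMeasurableSet.isMeagre_or_isMeagre_compl_of_E0_invariant {S : Set Cantor}
    (hS : BaireMeasurableSet S) (hinv : ∀ α β, E0 α β → α ∈ S → β ∈ S) :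
    IsMeagre S ∨ IsMeagre Sᶜ := by
  refine hS.isMeagre_or_isMeagre_compl_of_topologicallyTransitive
    fun U V _ hV ⟨a, ha⟩ ⟨b, hb⟩ => ?_
  obtain ⟨_, ⟨c, N, rfl⟩, hbc, hcV⟩ :=
    (PiNat.isTopologicalBasis_cylinders _).exists_subset_of_mem_open hb hV
  rw [← PiNat.mem_cylinder_iff_eq.1 hbc] at hcV
  set v : Cantor := fun i => if i < N then b i - a i else 0
  have hv : ∀ n ≥ N, v n = 0 := fun n hn => if_neg (not_lt.2 hn)
  refine ⟨Homeomorph.addLeft v, ?_, a, ha, hcV fun i hi => ?_⟩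
  · ext x
    exact ⟨hinv _ _ (E0_add_left hv x), hinv _ _ (E0_add_left hv x).symm⟩
  · simp [v, hi]

/-- `E₀*` is not smooth: there is no Borel map `g : 2^ℕ → ℝ` with
`α E₀* β ↔ g α = g β`. -/
theorem E0star_not_smooth :
    ¬ ∃ g : Cantor → ℝ, Measurable g ∧ ∀ α β : Cantor, E0star α β ↔ g α = g β := by
  rintro ⟨g, hg, hgE⟩
  have h_zero_one (s : Set ℝ) (hs : MeasurableSet s) :
      (∀ᵇ α, g α ∈ s) ∨ ∀ᵇ α, g α ∉ s := by
    have hinv (α β : Cantor) (h : E0 α β) (hα : α ∈ g ⁻¹' s) : β ∈ g ⁻¹' s := by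
      rwa [mem_preimage, ← (hgE α β).1 (Or.inl h)]
    rcases (hg hs).baireMeasurableSet.isMeagre_or_isMeagre_compl_of_E0_invariant hinv with h | h
    · exact Or.inr h
    · rw [IsMeagre, compl_compl] at h
      exact Or.inl h
  obtain ⟨c, hc⟩ := exists_eventuallyEq_const_of_forall_separating MeasurableSet h_zero_one
  have h_comeagre : {β | g β = c} ∈ residual Cantor := hc
  obtain ⟨α, hα⟩ := nonempty_of_not_isMeagre (not_isMeagre_of_mem_residual h_comeagre)
  have h_class : {β | g β = c} ⊆ {β | E0star β α} := fun β hβ => (hgE β α).2 (hβ.trans hα.symm)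
  exact not_isMeagre_of_mem_residual h_comeagre ((countable_setOf_E0star α).isMeagre.mono h_class)
end

section
/- The Knaster continuum H is a nonempty compact subset of ℝ². -/
/-!
Every piece `Hₖ` is a closed half of a union of circles centred on the x-axis through the points
of a compact set, hence compact. For `k ≥ 1` the piece `Hₖ` lies within `3/3ᵏ` of the origin, and
the origin lies on `H₀`. A union of compact sets that shrink to a point of the union is compact:
an open set of a cover containing the point swallows all but finitely many of them.
-/

open Set Filter Topology Metric

theorem Filter.Tendsto.isCompact_insert_iUnion {X ι : Type*} [TopologicalSpace X]
    {K : ι → Set X} {x : X} (hK : Tendsto K cofinite (𝓝 x).smallSets)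
    (hKc : ∀ i, IsCompact (K i)) : IsCompact (insert x (⋃ i, K i)) := by
  classical
  refine isCompact_of_finite_subcover fun U hUo hcover => ?_
  obtain ⟨j, hxj⟩ := mem_iUnion.mp (hcover (mem_insert x _))
  have hfin : Set.Finite {i | ¬K i ⊆ U j} :=
    eventually_cofinite.mp (tendsto_smallSets_iff.mp hK _ ((hUo j).mem_nhds hxj))
  obtain ⟨t, ht⟩ := (hfin.isCompact_biUnion fun i _ => hKc i).elim_finite_subcover U hUo
    ((iUnion₂_subset fun i _ => subset_iUnion _ i).trans (subset_insert x _) |>.trans hcover)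
  refine ⟨insert j t, ?_⟩
  rintro y (rfl | hy)
  · exact mem_biUnion (Finset.mem_insert_self j t) hxj
  obtain ⟨i, hyi⟩ := mem_iUnion.mp hy
  by_cases hij : K i ⊆ U j
  · exact mem_biUnion (Finset.mem_insert_self j t) (hij hyi)
  · obtain ⟨l, hl, hyl⟩ := mem_iUnion₂.mp (ht (mem_biUnion (s := {i | ¬K i ⊆ U j}) hij hyi))
    exact mem_biUnion (Finset.mem_insert_of_mem hl) hyl

def concentricCircles (a : ℝ) (A : Set ℝ) : Set (ℝ × ℝ) :=
  {p | ∃ c ∈ A, (p.1 - a) ^ 2 + p.2 ^ 2 = (c - a) ^ 2}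

theorem concentricCircles_subset_closedBall {a r : ℝ} {A : Set ℝ} (hA : A ⊆ closedBall a r) :
    concentricCircles a A ⊆ closedBall (a, 0) r := by
  rintro p ⟨c, hc, hp⟩
  have hca : (c - a) ^ 2 ≤ r ^ 2 := sq_le_sq' (abs_le.mp (hA hc)).1 (abs_le.mp (hA hc)).2
  have hr : 0 ≤ r := dist_nonneg.trans (hA hc)
  rw [mem_closedBall, Prod.dist_eq, Real.dist_eq, Real.dist_eq, sub_zero]
  exact max_le (abs_le_of_sq_le_sq (by nlinarith [sq_nonneg p.2]) hr)
    (abs_le_of_sq_le_sq (by nlinarith [sq_nonneg (p.1 - a)]) hr)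

theorem isCompact_concentricCircles (a : ℝ) {A : Set ℝ} (hA : IsCompact A) :
    IsCompact (concentricCircles a A) := by
  have hclosed : IsClosed (concentricCircles a A) := by
    have hA' : IsClosed ((fun c : ℝ => (c - a) ^ 2) '' A) :=
      (hA.image (by fun_prop)).isClosed
    convert hA'.preimage (f := fun p : ℝ × ℝ => (p.1 - a) ^ 2 + p.2 ^ 2) (by fun_prop) using 1
    ext p
    exact exists_congr fun c => and_congr_right fun _ => eq_comm
  obtain ⟨r, hr⟩ := hA.isBounded.subset_closedBall a
  exact isCompact_of_isClosed_isBounded hclosed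
    (isBounded_closedBall.subset (concentricCircles_subset_closedBall hr))

theorem Hset_zero :
    Hset 0 = {p | 0 ≤ p.2} ∩ concentricCircles (1 / 2) cantorSet := by
  rw [Hset, if_pos rfl]
  rfl

theorem Hset_of_ne_zero {k : ℕ} (hk : k ≠ 0) :
    Hset k = {p | p.2 ≤ 0} ∩
      concentricCircles (5 / (2 * 3 ^ k)) (cantorSet ∩ Icc (2 / 3 ^ k) (3 / 3 ^ k)) := by
  rw [Hset, if_neg hk]
  rfl

theorem isCompact_Hset (k : ℕ) : IsCompact (Hset k) := by
  rcases eq_or_ne k 0 with rfl | hk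
  · rw [Hset_zero]
    exact (isCompact_concentricCircles _ isCompact_cantorSet).inter_left
      (isClosed_le continuous_const continuous_snd)
  · rw [Hset_of_ne_zero hk]
    exact (isCompact_concentricCircles _ (isCompact_cantorSet.inter_right isClosed_Icc)).inter_left
      (isClosed_le continuous_snd continuous_const)

theorem zero_mem_Hset_zero : (0 : ℝ × ℝ) ∈ Hset 0 := by
  rw [Hset_zero]
  exact ⟨le_refl (0 : ℝ), 0, zero_mem_cantorSet, by norm_num⟩

theorem Hset_subset_closedBall {k : ℕ} (hk : k ≠ 0) : Hset k ⊆ closedBall 0 (3 / 3 ^ k) := by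
  have h3k : (0 : ℝ) < 3 ^ k := by positivity
  have hIcc : cantorSet ∩ Icc (2 / 3 ^ k) (3 / 3 ^ k) ⊆
      closedBall (5 / (2 * 3 ^ k)) (1 / (2 * 3 ^ k)) := by
    rw [Real.closedBall_eq_Icc]
    refine inter_subset_right.trans (Icc_subset_Icc (le_of_eq ?_) (le_of_eq ?_)) <;>
      field_simp <;> ring
  rw [Hset_of_ne_zero hk]
  refine inter_subset_right.trans ((concentricCircles_subset_closedBall hIcc).trans
    (closedBall_subset_closedBall' (le_of_eq ?_)))
  simp only [Prod.dist_eq, Real.dist_eq, Prod.fst_zero, Prod.snd_zero, sub_zero, abs_zero]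
  rw [abs_of_pos (by positivity), max_eq_left (by positivity)]
  field_simp
  ring

theorem tendsto_Hset_smallSets : Tendsto Hset atTop (𝓝 0).smallSets := by
  have hr : Tendsto (fun k : ℕ => (3 : ℝ) / 3 ^ k) atTop (𝓝 0) :=
    tendsto_const_nhds.div_atTop (tendsto_pow_atTop_atTop_of_one_lt (by norm_num))
  exact ((tendsto_closedBall_smallSets 0).comp hr).smallSets_mono
    ((eventually_ne_atTop 0).mono fun _ hk => Hset_subset_closedBall hk)

/-- The Knaster continuum `H` is a nonempty compact subset of `ℝ²`. -/
theorem knasterH_nonempty_compact : knasterH.Nonempty ∧ IsCompact knasterH := by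
  have h0 : (0 : ℝ × ℝ) ∈ knasterH := mem_iUnion_of_mem 0 zero_mem_Hset_zero
  have hcompact : IsCompact (insert 0 knasterH) :=
    (Nat.cofinite_eq_atTop ▸ tendsto_Hset_smallSets).isCompact_insert_iUnion isCompact_Hset
  exact ⟨⟨0, h0⟩, insert_eq_of_mem h0 ▸ hcompact⟩
end

section
/- For every n ∈ ℕ and all α, β ∈ 2^ℕ, if α Fₙ β or α Fₙ β̄, then ψ(α) and ψ(β) are joined by a path inside the Knaster continuum H, i.e. JoinedIn H (ψ α) (ψ β). -/
/-!
A point `x` of the Cantor set is joined inside `H` to `1 - x` by a semicircle of `H₀`; this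
swaps `ψ α` and `ψ ᾱ`. A point `x ∈ [2/3ᵏ, 3/3ᵏ]` is joined to `5/3ᵏ - x` by a semicircle of
`Hₖ`; in digits this complements everything after the leading `0…01` of length `k`. To join `α`
and `β` that first differ at `n`, say `α n = 0` and `β n = 1`, go from `α` to `ᾱ`, whose digit `n`
is `1`, then by induction to the sequence `0…01` followed by the tail of `ᾱ`, by an arc of `Hₙ₊₁`
to `0…01` followed by the tail of `α`, which is also the tail of `β`, and by induction to `β`.
-/

open Set Real

namespace Cantor

noncomputable def toReal (α : Cantor) : ℝ := ∑' i : ℕ, 2 * (α i : ℝ) / 3 ^ (i + 1)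

def leadingOne (n : ℕ) (α : Cantor) : Cantor :=
  fun i => if i < n then 0 else if i = n then 1 else α i

lemma psi_eq (α : Cantor) : psi α = (toReal α, 0) := rfl

lemma hasSum_two_div_three_pow : HasSum (fun i : ℕ => (2 : ℝ) / 3 ^ (i + 1)) 1 := by
  have h := (hasSum_geometric_of_lt_one (by norm_num) (by norm_num : (1 / 3 : ℝ) < 1)).mul_left
    (2 / 3)
  norm_num at h
  have hterm : (fun i : ℕ => (2 : ℝ) / 3 ^ (i + 1)) = fun i => 2 / 3 * (1 / 3) ^ i := by
    ext i
    rw [pow_succ, one_div_pow]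
    ring
  rwa [hterm]

lemma summable_toReal (α : Cantor) : Summable fun i : ℕ => 2 * (α i : ℝ) / 3 ^ (i + 1) := by
  refine .of_nonneg_of_le (fun i => by positivity) (fun i => ?_) hasSum_two_div_three_pow.summable
  obtain h | h : α i = 0 ∨ α i = 1 := by omega
  all_goals simp [h, div_nonneg]

lemma toReal_eq_sum_add (α : Cantor) (n : ℕ) :
    toReal α = ∑ i ∈ Finset.range n, 2 * (α i : ℝ) / 3 ^ (i + 1)
      + toReal (fun i => α (i + n)) / 3 ^ n := by
  rw [toReal, ← (summable_toReal α).sum_add_tsum_nat_add n, toReal, ← tsum_div_const]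
  congr 2 with i
  rw [add_right_comm, pow_add]
  ring

lemma toReal_eq_ofDigits (α : Cantor) :
    toReal α = Real.ofDigits fun i => cond (decide (α i = 1)) (2 : Fin 3) 0 := by
  refine tsum_congr fun i => ?_
  simp only [Real.ofDigitsTerm]
  obtain h | h : α i = 0 ∨ α i = 1 := by omega
  all_goals simp [h, div_eq_mul_inv]

lemma toReal_mem_cantorSet (α : Cantor) : toReal α ∈ cantorSet :=
  toReal_eq_ofDigits α ▸ ofDigits_bool_to_fin_three_mem_cantorSet _

lemma toReal_mem_Icc (α : Cantor) : toReal α ∈ Icc 0 1 :=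
  cantorSet_subset_unitInterval (toReal_mem_cantorSet α)

lemma toReal_add_toReal_cmpl (α : Cantor) : toReal α + toReal (cmpl α) = 1 := by
  rw [toReal, toReal, ← (summable_toReal α).tsum_add (summable_toReal _),
    ← hasSum_two_div_three_pow.tsum_eq]
  refine tsum_congr fun i => ?_
  obtain h | h : α i = 0 ∨ α i = 1 := by omega
  all_goals simp [cmpl, h]

lemma toReal_leadingOne (n : ℕ) (α : Cantor) :
    toReal (leadingOne n α) = (2 + toReal fun i => α (i + (n + 1))) / 3 ^ (n + 1) := by
  have hsum : ∑ i ∈ Finset.range (n + 1), 2 * (leadingOne n α i : ℝ) / 3 ^ (i + 1)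
      = 2 / 3 ^ (n + 1) := by
    rw [Finset.sum_range_succ, Finset.sum_eq_zero fun i hi => by
      simp [leadingOne, Finset.mem_range.1 hi]]
    simp [leadingOne]
  have htail : (fun i => leadingOne n α (i + (n + 1))) = fun i => α (i + (n + 1)) := by
    ext i
    simp [leadingOne, show ¬ i + (n + 1) < n by omega, show i + (n + 1) ≠ n by omega]
  rw [toReal_eq_sum_add _ (n + 1), hsum, htail, add_div]

lemma toReal_leadingOne_add_toReal_leadingOne_cmpl (n : ℕ) (α : Cantor) :
    toReal (leadingOne n α) + toReal (leadingOne n (cmpl α)) = 5 / 3 ^ (n + 1) := by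
  have h := toReal_add_toReal_cmpl fun i => α (i + (n + 1))
  rw [toReal_leadingOne, toReal_leadingOne]
  change _ + (2 + toReal (cmpl fun i => α (i + (n + 1)))) / _ = _
  rw [← add_div]
  congr 1
  linarith

lemma frel_leadingOne {n : ℕ} {α : Cantor} (h : α n = 1) : Frel n α (leadingOne n α) := by
  intro i hi
  rcases hi.eq_or_lt with rfl | hi
  · simp [leadingOne, h]
  · simp [leadingOne, hi.not_gt, hi.ne']

lemma leadingOne_eq_of_frel {n : ℕ} {α β : Cantor} (h : Frel (n + 1) α β) :
    leadingOne n α = leadingOne n β := by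
  ext i : 1
  simp only [leadingOne]
  split_ifs with hlt heq
  · rfl
  · rfl
  · exact h i (by omega)

end Cantor

lemma joinedIn_of_semicircle {S : Set (ℝ × ℝ)} {m r s : ℝ} (hs : s = 1 ∨ s = -1)
    (hS : ∀ p : ℝ × ℝ, 0 ≤ s * p.2 → (p.1 - m) ^ 2 + p.2 ^ 2 = r ^ 2 → p ∈ S) :
    JoinedIn S (m + r, 0) (m - r, 0) := by
  have hs2 : s ^ 2 = 1 := by rcases hs with rfl | rfl <;> norm_num
  refine JoinedIn.ofLine (f := fun t => (m + r * cos (π * t), s * |r| * sin (π * t)))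
    (by fun_prop) (by simp) (by simp; ring) ?_
  rintro _ ⟨t, ht, rfl⟩
  have hsin : 0 ≤ sin (π * t) :=
    sin_nonneg_of_nonneg_of_le_pi (by nlinarith [pi_pos, ht.1]) (by nlinarith [pi_pos, ht.2])
  refine hS _ ?_ ?_
  · have : s * (s * |r| * sin (π * t)) = |r| * sin (π * t) := by
      linear_combination |r| * sin (π * t) * hs2
    rw [this]
    positivity
  · rw [add_sub_cancel_left, mul_pow, mul_pow, mul_pow, sq_abs]
    linear_combination r ^ 2 * sin_sq_add_cos_sq (π * t) + r ^ 2 * sin (π * t) ^ 2 * hs2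

open Cantor

lemma joinedIn_psi_cmpl (α : Cantor) : JoinedIn knasterH (psi α) (psi (cmpl α)) := by
  have hS : ∀ p : ℝ × ℝ, 0 ≤ 1 * p.2 →
      (p.1 - 1 / 2) ^ 2 + p.2 ^ 2 = (toReal α - 1 / 2) ^ 2 → p ∈ knasterH := fun p hp hcirc =>
    mem_iUnion.2 ⟨0, by
      simp only [Hset, if_pos]
      exact ⟨by linarith, _, toReal_mem_cantorSet α, hcirc⟩⟩
  have h := joinedIn_of_semicircle (Or.inl rfl) hS
  have hc := toReal_add_toReal_cmpl α
  rw [psi_eq, psi_eq]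
  convert h using 2 <;> linarith

lemma joinedIn_psi_leadingOne_cmpl (n : ℕ) (α : Cantor) :
    JoinedIn knasterH (psi (leadingOne n α)) (psi (leadingOne n (cmpl α))) := by
  set x := toReal (leadingOne n α)
  set m : ℝ := 5 / (2 * 3 ^ (n + 1))
  have hx : x ∈ Icc ((2 : ℝ) / 3 ^ (n + 1)) (3 / 3 ^ (n + 1)) := by
    have := toReal_mem_Icc fun i => α (i + (n + 1))
    simp only [x, toReal_leadingOne]
    constructor <;> gcongr <;> linarith [this.1, this.2]
  have hS : ∀ p : ℝ × ℝ, 0 ≤ -1 * p.2 → (p.1 - m) ^ 2 + p.2 ^ 2 = (x - m) ^ 2 →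
      p ∈ knasterH := fun p hp hcirc =>
    mem_iUnion.2 ⟨n + 1, by
      simp only [Hset, if_neg n.succ_ne_zero]
      exact ⟨by linarith, x, ⟨toReal_mem_cantorSet _, hx⟩, hcirc⟩⟩
  have h := joinedIn_of_semicircle (Or.inr rfl) hS
  have hsum : x + _ = _ := toReal_leadingOne_add_toReal_leadingOne_cmpl n α
  have hm : 2 * m = 5 / 3 ^ (n + 1) := by simp only [m]; field_simp
  rw [psi_eq, psi_eq]
  convert h using 2 <;> linarith

lemma joinedIn_psi_of_frel (n : ℕ) (α β : Cantor) (h : Frel n α β) :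
    JoinedIn knasterH (psi α) (psi β) := by
  induction n generalizing α β with
  | zero =>
    obtain rfl : α = β := funext fun i => h i i.zero_le
    exact .refl (joinedIn_psi_cmpl α).source_mem
  | succ n ih =>
    by_cases hn : α n = β n
    · exact ih α β fun i hi => hi.eq_or_lt.elim (· ▸ hn) (h i)
    wlog hα : α n = 0 generalizing α β
    · exact (this β α (fun i hi => (h i hi).symm) (Ne.symm hn) (by omega)).symm
    have hβ : β n = 1 := by omega
    have hcmpl : cmpl α n = 1 := by simp [cmpl, hα]
    refine (joinedIn_psi_cmpl α).trans <| (ih _ _ (frel_leadingOne hcmpl)).trans <|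
      (joinedIn_psi_leadingOne_cmpl n α).symm.trans ?_
    rw [leadingOne_eq_of_frel h]
    exact (ih _ _ (frel_leadingOne hβ)).symm

/-- If `α Fₙ β` or `α Fₙ β̄` then `ψ α` and `ψ β` are joined by a path
inside the Knaster continuum `H`. -/
theorem psi_joinedIn_of_Frel :
    ∀ n : ℕ, ∀ α β : Cantor, (Frel n α β ∨ Frel n α (cmpl β)) →
      JoinedIn knasterH (psi α) (psi β) := by
  rintro n α β (h | h)
  · exact joinedIn_psi_of_frel n α β h
  · exact (joinedIn_psi_of_frel n α _ h).trans (joinedIn_psi_cmpl β).symm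
end

section
/- Let α, β ∈ 2^ℕ be not E₀*-equivalent, and suppose γ : [0,1] → ℝ² is a continuous map with image contained in the Knaster continuum H, γ(0) = ψ(α) and γ(1) = ψ(β). Then the set {k ∈ ℕ : γ([0,1]) ∩ Hₖ ≠ ∅} is infinite. -/
/-!
Fix `N` and give a point `p` on the arc of `Hₖ` (`k ≤ N`) the phase of `3ᴺ · r` in `ℝ/ℤ`, where
`r` is the distance from `p` to the centre of that arc. Since `3ᴺ` times every centre is a
half-integer, two arcs meeting on the x-axis assign the same phase there, and on every arc the
phase is `|c' - 1/2|` for some point `c'` of the Cantor set. If a path met only `H₀, …, H_N`, the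
phase along it would thus be a continuous map into a translate of the totally disconnected Cantor
set, hence constant. At `ψ α` the phase is `|x - 1/2|`, where `x` has the ternary digits of the
`N`-th tail of `α`, so the tails of `α` and `β` would be equal or complementary.
-/

open Set Real

theorem AddCircle.norm_coe_abs {p : ℝ} (x : ℝ) :
    ‖((|x| : ℝ) : AddCircle p)‖ = ‖(x : AddCircle p)‖ := by
  rcases abs_choice x with h | h <;> rw [h]
  rw [AddCircle.coe_neg, norm_neg]

namespace UnitAddCircle

theorem norm_coe_sub_intCast (x : ℝ) (m : ℤ) :
    ‖((x - m : ℝ) : UnitAddCircle)‖ = ‖(x : UnitAddCircle)‖ := by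
  rw [AddCircle.coe_sub, (AddCircle.coe_eq_zero_iff (1 : ℝ) (x := (m : ℝ))).2 ⟨m, by simp⟩,
    sub_zero]

theorem norm_coe_of_abs_le {x : ℝ} (hx : |x| ≤ 1 / 2) : ‖(x : UnitAddCircle)‖ = |x| :=
  (AddCircle.norm_coe_eq_abs_iff (p := (1 : ℝ)) one_ne_zero).2 (by simpa using hx)

theorem norm_coe_mul_abs_sub {t a s : ℝ} (ht : 0 ≤ t) {m : ℤ} (h : t * a = m + s) (x : ℝ) :
    ‖((t * |x - a| : ℝ) : UnitAddCircle)‖ = ‖((t * x - s : ℝ) : UnitAddCircle)‖ := by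
  have : t * |x - a| = |t * x - s - m| := by
    rw [← abs_of_nonneg ht, ← abs_mul, abs_of_nonneg ht]
    congr 1
    linear_combination -h
  rw [this, AddCircle.norm_coe_abs, norm_coe_sub_intCast]

end UnitAddCircle

theorem LocallyFinite.exists_continuous_eqOn {ι X Y : Type*} [TopologicalSpace X]
    [TopologicalSpace Y] {S : ι → Set X} (hS : LocallyFinite S) (hcover : ∀ x, ∃ i, x ∈ S i)
    (hclosed : ∀ i, IsClosed (S i)) {f : ι → X → Y} (hf : ∀ i, ContinuousOn (f i) (S i))
    (hagree : ∀ i j x, x ∈ S i → x ∈ S j → f i x = f j x) :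
    ∃ g : X → Y, Continuous g ∧ ∀ i, EqOn g (f i) (S i) := by
  choose idx hidx using hcover
  have hg : ∀ i, EqOn (fun x ↦ f (idx x) x) (f i) (S i) := fun i x hx ↦ hagree _ _ _ (hidx x) hx
  exact ⟨_, hS.continuous (iUnion_eq_univ_iff.2 fun x ↦ ⟨_, hidx x⟩) hclosed
    fun i ↦ (hf i).congr (hg i), hg⟩

namespace Real

theorem ofDigits_rev {b : ℕ} (hb : 1 < b) (a : ℕ → Fin b) :
    ofDigits (fun i ↦ (a i).rev) = 1 - ofDigits a := by
  rw [eq_sub_iff_add_eq, ← ofDigits_const_last_eq_one' hb, ofDigits, ofDigits, ofDigits,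
    ← summable_ofDigitsTerm.tsum_add summable_ofDigitsTerm]
  refine tsum_congr fun i ↦ ?_
  have := (a i).isLt
  simp only [ofDigitsTerm, Fin.val_rev, ← add_mul]
  rw [Nat.cast_sub (by omega), Nat.cast_sub (by omega)]
  push_cast
  ring

theorem exists_nat_pow_mul_ofDigits {b : ℕ} (a : ℕ → Fin b) (n : ℕ) :
    ∃ m : ℕ, (b : ℝ) ^ n * ofDigits a = m + ofDigits (fun i ↦ a (i + n)) := by
  have hb : (b : ℝ) ≠ 0 := by have := Fin.pos (a 0); positivity
  induction n with
  | zero => exact ⟨0, by simp⟩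
  | succ n ih =>
    obtain ⟨m, hm⟩ := ih
    have hstep := ofDigits_eq_sum_add_ofDigits (fun i ↦ a (i + n)) 1
    simp only [Finset.range_one, Finset.sum_singleton, ofDigitsTerm, pow_one, zero_add,
      add_assoc, add_comm 1 n] at hstep
    refine ⟨b * m + a n, ?_⟩
    rw [pow_succ, mul_comm _ (b : ℝ), mul_assoc, hm, hstep]
    field_simp
    push_cast
    ring

theorem norm_coe_pow_mul_ofDigits_sub_half {b : ℕ} (a : ℕ → Fin b) (n : ℕ) :
    ‖(((b : ℝ) ^ n * ofDigits a - 1 / 2 : ℝ) : UnitAddCircle)‖ =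
      |ofDigits (fun i ↦ a (i + n)) - 1 / 2| := by
  obtain ⟨m, hm⟩ := exists_nat_pow_mul_ofDigits a n
  have h0 := ofDigits_nonneg (fun i ↦ a (i + n))
  have h1 := ofDigits_le_one (fun i ↦ a (i + n))
  rw [hm, show (m : ℝ) + ofDigits (fun i ↦ a (i + n)) - 1 / 2 =
      ofDigits (fun i ↦ a (i + n)) - 1 / 2 - ((-m : ℤ) : ℝ) by push_cast; ring,
    UnitAddCircle.norm_coe_sub_intCast,
    UnitAddCircle.norm_coe_of_abs_le (abs_le.2 ⟨by linarith, by linarith⟩)]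

end Real

theorem one_sub_mem_cantorSet {c : ℝ} (hc : c ∈ cantorSet) : 1 - c ∈ cantorSet := by
  rw [cantorSet_eq_zero_two_ofDigits] at hc ⊢
  obtain ⟨a, ha, rfl⟩ := hc
  refine ⟨fun i ↦ (a i).rev, fun i h ↦ ha i ?_, ofDigits_rev (by norm_num) a⟩
  rw [← Fin.rev_rev (a i), show (a i).rev = 1 from h]
  rfl

theorem half_add_norm_coe_three_pow_mul_sub_half_mem_cantorSet {c : ℝ} (hc : c ∈ cantorSet)
    (n : ℕ) : 1 / 2 + ‖(((3 : ℝ) ^ n * c - 1 / 2 : ℝ) : UnitAddCircle)‖ ∈ cantorSet := by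
  rw [cantorSet_eq_zero_two_ofDigits] at hc
  obtain ⟨a, ha, rfl⟩ := hc
  have htail : ofDigits (fun i ↦ a (i + n)) ∈ cantorSet :=
    ofDigits_zero_two_sequence_mem_cantorSet fun i ↦ ha (i + n)
  have := norm_coe_pow_mul_ofDigits_sub_half a n
  push_cast at this
  rw [this]
  rcases le_total (1 / 2) (ofDigits (fun i ↦ a (i + n))) with h | h
  · rwa [abs_of_nonneg (by linarith), add_sub_cancel]
  · rw [abs_of_nonpos (by linarith), show ∀ x : ℝ, 1 / 2 + -(x - 1 / 2) = 1 - x by intro; ring]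
    exact one_sub_mem_cantorSet htail

instance : TotallyDisconnectedSpace cantorSet :=
  cantorSetHomeomorphNatToBool.symm.totallyDisconnectedSpace

def cantorDigits (α : Cantor) : ℕ → Fin 3 := fun i ↦ ![0, 2] (α i)

theorem psi_fst (α : Cantor) : (psi α).1 = ofDigits (cantorDigits α) := by
  refine tsum_congr fun i ↦ ?_
  rcases Fin.exists_fin_two.1 ⟨α i, rfl⟩ with h | h <;>
    simp [ofDigitsTerm, cantorDigits, h, div_eq_mul_inv]

theorem cantorDigits_ne_one (α : Cantor) (i : ℕ) : cantorDigits α i ≠ 1 := by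
  rcases Fin.exists_fin_two.1 ⟨α i, rfl⟩ with h | h <;> simp [cantorDigits, h]

theorem cantorDigits_cmpl (α : Cantor) :
    cantorDigits (cmpl α) = fun i ↦ (cantorDigits α i).rev := by
  funext i
  rcases Fin.exists_fin_two.1 ⟨α i, rfl⟩ with h | h <;> simp [cantorDigits, cmpl, h]

theorem eq_of_ofDigits_cantorDigits_eq {α β : Cantor}
    (h : ofDigits (cantorDigits α) = ofDigits (cantorDigits β)) : α = β := by
  funext i
  have := congrFun (ofDigits_zero_two_sequence_unique (cantorDigits_ne_one α)
    (cantorDigits_ne_one β) h) i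
  rcases Fin.exists_fin_two.1 ⟨α i, rfl⟩ with ha | ha <;>
    rcases Fin.exists_fin_two.1 ⟨β i, rfl⟩ with hb | hb <;>
    simp_all [cantorDigits]

theorem E0_of_shift_eq {α β : Cantor} {n : ℕ} (h : (fun i ↦ α (i + n)) = fun i ↦ β (i + n)) :
    E0 α β :=
  ⟨n, fun i hi ↦ by simpa only [Nat.sub_add_cancel hi] using congrFun h (i - n)⟩

theorem E0star_of_norm_coe_psi_eq {α β : Cantor} (n : ℕ)
    (h : ‖(((3 : ℝ) ^ n * (psi α).1 - 1 / 2 : ℝ) : UnitAddCircle)‖ =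
      ‖(((3 : ℝ) ^ n * (psi β).1 - 1 / 2 : ℝ) : UnitAddCircle)‖) :
    E0star α β := by
  have hshift := fun δ : Cantor ↦ norm_coe_pow_mul_ofDigits_sub_half (cantorDigits δ) n
  push_cast at hshift
  rw [psi_fst, psi_fst, hshift, hshift] at h
  change |ofDigits (cantorDigits fun i ↦ α (i + n)) - 1 / 2| =
    |ofDigits (cantorDigits fun i ↦ β (i + n)) - 1 / 2| at h
  rcases abs_eq_abs.1 h with h | h
  · exact Or.inl (E0_of_shift_eq (n := n) (eq_of_ofDigits_cantorDigits_eq (by linarith)))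
  · refine Or.inr (E0_of_shift_eq (n := n) (eq_of_ofDigits_cantorDigits_eq ?_))
    change _ = ofDigits (cantorDigits (cmpl fun i ↦ β (i + n)))
    rw [cantorDigits_cmpl, ofDigits_rev (by norm_num)]
    linarith

theorem isClosed_setOf_exists_sq_eq {K : Set ℝ} (hK : IsCompact K) (a : ℝ) :
    IsClosed {p : ℝ × ℝ | ∃ c ∈ K, (p.1 - a) ^ 2 + p.2 ^ 2 = (c - a) ^ 2} := by
  have : {p : ℝ × ℝ | ∃ c ∈ K, (p.1 - a) ^ 2 + p.2 ^ 2 = (c - a) ^ 2} =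
      (fun p : ℝ × ℝ ↦ (p.1 - a) ^ 2 + p.2 ^ 2) ⁻¹' ((fun c ↦ (c - a) ^ 2) '' K) := by
    ext p
    simp [eq_comm]
  rw [this]
  exact (hK.image (by fun_prop)).isClosed.preimage (by fun_prop)

theorem isClosed_Hset (k : ℕ) : IsClosed (Hset k) := by
  unfold Hset
  split_ifs
  · rw [ofPred_and]
    exact (isClosed_le continuous_const continuous_snd).inter
      (isClosed_setOf_exists_sq_eq isCompact_cantorSet _)
  · rw [ofPred_and]
    exact (isClosed_le continuous_snd continuous_const).inter
      (isClosed_setOf_exists_sq_eq (isCompact_cantorSet.inter_right isClosed_Icc) _)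

theorem psi_mem_Hset_zero (α : Cantor) : psi α ∈ Hset 0 := by
  rw [Hset, if_pos rfl]
  refine ⟨le_rfl, (psi α).1, ?_, by simp [psi]⟩
  rw [psi_fst]
  exact ofDigits_zero_two_sequence_mem_cantorSet (cantorDigits_ne_one α)

theorem three_div_pow_lt_two_div_pow {j k : ℕ} (h : j < k) : (3 : ℝ) / 3 ^ k < 2 / 3 ^ j := by
  rw [div_lt_div_iff₀ (by positivity) (by positivity)]
  have : (3 : ℝ) ^ (j + 1) ≤ 3 ^ k := pow_le_pow_right₀ (by norm_num) h
  rw [pow_succ] at this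
  linarith [pow_pos (three_pos : (0 : ℝ) < 3) j]

theorem fst_mem_Icc_of_mem_Hset {k : ℕ} (hk : k ≠ 0) {p : ℝ × ℝ} (hp : p ∈ Hset k) :
    p.1 ∈ Icc ((2 : ℝ) / 3 ^ k) (3 / 3 ^ k) := by
  rw [Hset, if_neg hk] at hp
  obtain ⟨-, c, ⟨-, hc⟩, h⟩ := hp
  have hr : |p.1 - 5 / (2 * 3 ^ k)| ≤ |c - 5 / (2 * 3 ^ k)| :=
    sq_le_sq.1 (h ▸ le_add_of_nonneg_right (sq_nonneg _))
  simp only [mem_Icc, div_eq_mul_inv, mul_inv] at hc hr ⊢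
  have hc' : |c - 5 * (2⁻¹ * (3 ^ k)⁻¹)| ≤ 2⁻¹ * ((3 : ℝ) ^ k)⁻¹ :=
    abs_le.2 ⟨by linarith, by linarith⟩
  have := abs_le.1 (hr.trans hc')
  constructor <;> linarith

noncomputable def arcCenter (k : ℕ) : ℝ := if k = 0 then 1 / 2 else 5 / (2 * 3 ^ k)

noncomputable def arcPhase (N : ℕ) (a : ℝ) (p : ℝ × ℝ) : ℝ :=
  ‖(((3 : ℝ) ^ N * √((p.1 - a) ^ 2 + p.2 ^ 2) : ℝ) : UnitAddCircle)‖

theorem continuous_arcPhase (N : ℕ) (a : ℝ) : Continuous (arcPhase N a) :=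
  continuous_norm.comp ((AddCircle.continuous_mk' 1).comp (by fun_prop))

theorem exists_three_pow_mul_arcCenter {N k : ℕ} (hk : k ≤ N) :
    ∃ m : ℤ, (3 : ℝ) ^ N * arcCenter k = m + 1 / 2 := by
  suffices ∃ n : ℕ, Odd n ∧ (3 : ℝ) ^ N * arcCenter k = n / 2 by
    obtain ⟨n, ⟨m, rfl⟩, h⟩ := this
    exact ⟨m, by rw [h]; push_cast; ring⟩
  rcases eq_or_ne k 0 with rfl | hk0
  · exact ⟨3 ^ N, Odd.pow (by decide), by simp [arcCenter]; ring⟩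
  · refine ⟨5 * 3 ^ (N - k), (by decide : Odd 5).mul (Odd.pow (by decide)), ?_⟩
    rw [arcCenter, if_neg hk0, ← Nat.sub_add_cancel hk, pow_add, Nat.add_sub_cancel]
    push_cast
    field_simp

theorem arcPhase_arcCenter_of_sq_eq {N k : ℕ} (hk : k ≤ N) {p : ℝ × ℝ} {x : ℝ}
    (h : (p.1 - arcCenter k) ^ 2 + p.2 ^ 2 = (x - arcCenter k) ^ 2) :
    arcPhase N (arcCenter k) p = ‖(((3 : ℝ) ^ N * x - 1 / 2 : ℝ) : UnitAddCircle)‖ := by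
  obtain ⟨m, hm⟩ := exists_three_pow_mul_arcCenter hk
  rw [arcPhase, h, sqrt_sq_eq_abs]
  exact UnitAddCircle.norm_coe_mul_abs_sub (by positivity) hm x

theorem exists_mem_cantorSet_of_mem_Hset {k : ℕ} {p : ℝ × ℝ} (hp : p ∈ Hset k) :
    ∃ c ∈ cantorSet, (p.1 - arcCenter k) ^ 2 + p.2 ^ 2 = (c - arcCenter k) ^ 2 := by
  unfold Hset at hp
  unfold arcCenter
  split_ifs at hp ⊢
  · exact hp.2
  · obtain ⟨-, c, hc, h⟩ := hp
    exact ⟨c, hc.1, h⟩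

theorem snd_eq_zero_of_mem_Hset_of_mem_Hset {j k : ℕ} (hjk : j ≠ k) {p : ℝ × ℝ}
    (hj : p ∈ Hset j) (hk : p ∈ Hset k) : p.2 = 0 := by
  wlog hlt : j < k generalizing j k
  · exact this hjk.symm hk hj (lt_of_le_of_ne (not_lt.1 hlt) hjk.symm)
  have hk0 : k ≠ 0 := by omega
  rcases eq_or_ne j 0 with rfl | hj0
  · rw [Hset, if_pos rfl] at hj
    rw [Hset, if_neg hk0] at hk
    exact le_antisymm hk.1 hj.1
  · have := three_div_pow_lt_two_div_pow hlt
    have := fst_mem_Icc_of_mem_Hset hj0 hj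
    have := fst_mem_Icc_of_mem_Hset hk0 hk
    simp only [mem_Icc] at *
    linarith

theorem arcPhase_eq_of_mem_Hset_of_mem_Hset {N j k : ℕ} (hjN : j ≤ N) (hkN : k ≤ N)
    {p : ℝ × ℝ} (hj : p ∈ Hset j) (hk : p ∈ Hset k) :
    arcPhase N (arcCenter j) p = arcPhase N (arcCenter k) p := by
  rcases eq_or_ne j k with rfl | hjk
  · rfl
  have hp2 := snd_eq_zero_of_mem_Hset_of_mem_Hset hjk hj hk
  rw [arcPhase_arcCenter_of_sq_eq hjN (x := p.1) (by rw [hp2]; ring),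
    arcPhase_arcCenter_of_sq_eq hkN (x := p.1) (by rw [hp2]; ring)]

theorem half_add_arcPhase_mem_cantorSet {N k : ℕ} (hkN : k ≤ N) {p : ℝ × ℝ}
    (hp : p ∈ Hset k) : 1 / 2 + arcPhase N (arcCenter k) p ∈ cantorSet := by
  obtain ⟨c, hc, h⟩ := exists_mem_cantorSet_of_mem_Hset hp
  rw [arcPhase_arcCenter_of_sq_eq hkN h]
  exact half_add_norm_coe_three_pow_mul_sub_half_mem_cantorSet hc N

theorem E0star_of_arcPhase_psi_eq {α β : Cantor} (N : ℕ)
    (h : arcPhase N (arcCenter 0) (psi α) = arcPhase N (arcCenter 0) (psi β)) :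
    E0star α β := by
  rw [arcPhase_arcCenter_of_sq_eq (Nat.zero_le N) (x := (psi α).1) (by simp [psi]),
    arcPhase_arcCenter_of_sq_eq (Nat.zero_le N) (x := (psi β).1) (by simp [psi])] at h
  exact E0star_of_norm_coe_psi_eq N h

/-- Any path in `H` from `ψ α` to `ψ β` with `α, β` not `E₀*`-equivalent
meets infinitely many of the pieces `Hₖ`. -/
theorem path_meets_infinitely_many_Hset :
    ∀ α β : Cantor, ¬ E0star α β →
      ∀ γ : ↥unitInterval → ℝ × ℝ, Continuous γ → Set.range γ ⊆ knasterH →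
        γ 0 = psi α → γ 1 = psi β →
        {k : ℕ | (Set.range γ ∩ Hset k).Nonempty}.Infinite := by
  intro α β hαβ γ hγ hγH hγ0 hγ1
  by_contra hfin
  have hfin := not_infinite.1 hfin
  obtain ⟨N, hN⟩ := hfin.bddAbove
  have hle : ∀ k t, γ t ∈ Hset k → k ≤ N := fun k t ht ↦ hN ⟨γ t, mem_range_self t, ht⟩
  have hcover : ∀ t, ∃ k, γ t ∈ Hset k := fun t ↦ mem_iUnion.1 (hγH (mem_range_self t))
  have hlf : LocallyFinite fun k ↦ γ ⁻¹' Hset k := fun _ ↦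
    ⟨univ, Filter.univ_mem, hfin.subset fun k ⟨t, ht, _⟩ ↦ ⟨γ t, mem_range_self t, ht⟩⟩
  obtain ⟨g, hg, hgS⟩ := hlf.exists_continuous_eqOn (f := fun k t ↦ arcPhase N (arcCenter k) (γ t))
    hcover (fun k ↦ (isClosed_Hset k).preimage hγ)
    (fun k ↦ ((continuous_arcPhase N _).comp hγ).continuousOn)
    (fun j k t hj hk ↦ arcPhase_eq_of_mem_Hset_of_mem_Hset (hle j t hj) (hle k t hk) hj hk)
  have hgC : ∀ t, 1 / 2 + g t ∈ cantorSet := fun t ↦ by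
    obtain ⟨k, hk⟩ := hcover t
    rw [hgS k hk]
    exact half_add_arcPhase_mem_cantorSet (hle k t hk) hk
  have hg01 : g 0 = g 1 := by
    simpa using TotallyDisconnectedSpace.eq_of_continuous
      (fun t ↦ (⟨1 / 2 + g t, hgC t⟩ : cantorSet)) (by fun_prop) 0 1
  have h0 : γ 0 ∈ Hset 0 := hγ0 ▸ psi_mem_Hset_zero α
  have h1 : γ 1 ∈ Hset 0 := hγ1 ▸ psi_mem_Hset_zero β
  refine hαβ (E0star_of_arcPhase_psi_eq N ?_)
  rw [← hγ0, ← hγ1]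
  exact (hgS 0 h0).symm.trans (hg01.trans (hgS 0 h1))
end
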